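/- Let N ≥ 5 with N ≠ 6, and let P be the configuration of N points at the vertices of a regular N-gon (one vertex at the origin), viewed as a 2×(N-1) real matrix. Then there exists an (N-1)×(N-1) integer matrix A with |det A| = 1 and A ≡ I (mod 2), such that the configuration PA is the vertex set of a regular N-gon with strictly larger side length than P. -/

import Mathlib

open Real

noncomputable section

/-- The `j`-th vertex of a regular `N`-gon with circumradius `r`, phase `φ`, listed in
counterclockwise order and translated so that the `0`-th vertex is the origin. -/
def ngonVert (N : ℕ) (r φ : ℝ) (j : ℕ) : Fin 2 → ℝ :=
  ![r * cos (2 * π * j / N + φ) - r * cos φ, r * sin (2 * π * j / N + φ) - r * sin φ]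

/-- The `2 × (N-1)` matrix whose columns are the nonzero vertices `p₁, …, p_{N-1}` of a
regular `N`-gon with `p₀ = 0`. -/
def ngonMatrix (N : ℕ) (r φ : ℝ) : Matrix (Fin 2) (Fin (N - 1)) ℝ :=
  fun a i => ngonVert N r φ ((i : ℕ) + 1) a

namespace NgonAux

open Matrix

lemma sum_ite_coe {R : Type*} [AddCommMonoid R] {n : ℕ} (f : Fin n → R) (c : ℕ) :
    (∑ k : Fin n, if (k : ℕ) = c then f k else 0) =
      if h : c < n then f ⟨c, h⟩ else 0 := by
  split_ifs with h
  · rw [Finset.sum_eq_single (⟨c, h⟩ : Fin n)]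
    · simp
    · intro b _ hb
      rw [if_neg]
      exact fun hc => hb (Fin.ext hc)
    · simp
  · apply Finset.sum_eq_zero
    intro k _
    rw [if_neg]
    exact fun hk => h (hk ▸ k.isLt)

variable (N : ℕ)

/-- The matrix of multiplication by `ω` on the lattice spanned by `ω^k - 1`, `k = 1, …, N-1`. -/
def Mmat : Matrix (Fin (N - 1)) (Fin (N - 1)) ℤ :=
  fun k l => (if (k : ℕ) = (l : ℕ) + 1 then 1 else 0) - (if (k : ℕ) = 0 then 1 else 0)

def Evec (j : ℕ) : Fin (N - 1) → ℤ := fun k => if (k : ℕ) + 1 = j % N then 1 else 0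

lemma mulVec_Evec (hN : 2 ≤ N) (j : ℕ) :
    (Mmat N) *ᵥ (Evec N j) = Evec N (j + 1) - Evec N 1 := by
  funext k
  have hk := k.isLt
  have hjN : j % N < N := Nat.mod_lt _ (by omega)
  have hj1 : (j + 1) % N = (j % N + 1) % N := by
    conv_lhs => rw [← Nat.mod_add_mod]
  simp only [Matrix.mulVec, dotProduct, Mmat, Evec, Pi.sub_apply, sub_mul]
  rw [Finset.sum_sub_distrib]
  have e1 : ∀ l : Fin (N - 1),
      (if (k : ℕ) = (l : ℕ) + 1 then (1:ℤ) else 0) * (if (l : ℕ) + 1 = j % N then 1 else 0)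
      = if (l : ℕ) = (k : ℕ) - 1 then
          (if (k : ℕ) = j % N ∧ 1 ≤ (k : ℕ) then 1 else 0) else 0 := by
    intro l
    split_ifs <;> omega
  have e2 : ∀ l : Fin (N - 1),
      (if (k : ℕ) = 0 then (1:ℤ) else 0) * (if (l : ℕ) + 1 = j % N then 1 else 0)
      = if (l : ℕ) = j % N - 1 then
          (if (k : ℕ) = 0 ∧ 1 ≤ j % N then 1 else 0) else 0 := by
    intro l
    split_ifs <;> omega
  rw [Finset.sum_congr rfl (fun l _ => e1 l), Finset.sum_congr rfl (fun l _ => e2 l),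
    sum_ite_coe, sum_ite_coe]
  rw [dif_pos (by omega : (k : ℕ) - 1 < N - 1), dif_pos (by omega : j % N - 1 < N - 1)]
  have h1N : 1 % N = 1 := Nat.mod_eq_of_lt (by omega)
  have hsplit : ((j % N + 1) % N = 0 ∧ j % N = N - 1) ∨
      ((j % N + 1) % N = j % N + 1 ∧ j % N < N - 1) := by
    by_cases ht : j % N = N - 1
    · left
      refine ⟨?_, ht⟩
      rw [ht]
      have h : N - 1 + 1 = N := by omega
      rw [h, Nat.mod_self]
    · right
      exact ⟨Nat.mod_eq_of_lt (by omega), by omega⟩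
  rcases hsplit with ⟨ha, hb⟩ | ⟨ha, hb⟩ <;> rw [hj1] <;> split_ifs <;> omega

lemma Evec_zero_mod (j : ℕ) (hj : j % N = 0) : Evec N j = 0 := by
  funext k
  simp [Evec, hj]

lemma Evec_add_N (j : ℕ) : Evec N (j + N) = Evec N j := by
  funext k
  simp [Evec, Nat.add_mod_right]

lemma pow_mulVec_Evec (hN : 2 ≤ N) (m : ℕ) : ∀ j : ℕ,
    (Mmat N) ^ m *ᵥ (Evec N j) = Evec N (j + m) - Evec N m := by
  induction m with
  | zero =>
      intro j
      simp [Evec_zero_mod N 0 (by simp)]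
  | succ m ih =>
      intro j
      rw [pow_succ, ← Matrix.mulVec_mulVec, mulVec_Evec N hN j, Matrix.mulVec_sub, ih, ih]
      have h1 : j + 1 + m = j + (m + 1) := by omega
      have h2 : 1 + m = m + 1 := by omega
      rw [h1, h2]
      abel

lemma Evec_single (l : Fin (N - 1)) : Evec N ((l : ℕ) + 1) = Pi.single l 1 := by
  funext k
  have h : ((l : ℕ) + 1) % N = (l : ℕ) + 1 := Nat.mod_eq_of_lt (by omega)
  simp only [Evec, h, Pi.single_apply]
  by_cases hkl : k = l
  · simp [hkl]
  · rw [if_neg (by simpa [Fin.ext_iff] using hkl), if_neg hkl]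

lemma matrix_ext_mulVec {A B : Matrix (Fin (N-1)) (Fin (N-1)) ℤ}
    (h : ∀ l, A *ᵥ Pi.single l 1 = B *ᵥ Pi.single l 1) : A = B := by
  ext k l
  have := congrFun (h l) k
  simpa [Matrix.mulVec_single] using this

lemma Mpow_N (hN : 2 ≤ N) : (Mmat N) ^ N = 1 := by
  apply matrix_ext_mulVec
  intro l
  rw [← Evec_single, pow_mulVec_Evec N hN, Evec_add_N,
    Evec_zero_mod N N (Nat.mod_self N), Matrix.one_mulVec]
  abel

lemma sum_Evec_shift (j : ℕ) :
    ∑ m ∈ Finset.range N, Evec N (j + m) = ∑ m ∈ Finset.range N, Evec N m := by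
  induction j with
  | zero => simp
  | succ j ih =>
      rw [← ih]
      have h1 : ∑ m ∈ Finset.range N, Evec N (j + 1 + m)
          = ∑ m ∈ Finset.range N, Evec N (j + (m + 1)) := by
        apply Finset.sum_congr rfl
        intro m _
        exact congrArg (Evec N) (by omega)
      have h2 := Finset.sum_range_succ' (fun m => Evec N (j + m)) N
      have h3 := Finset.sum_range_succ (fun m => Evec N (j + m)) N
      have h5 : Evec N (j + N) = Evec N (j + 0) := by
        rw [Evec_add_N]
        exact congrArg (Evec N) (by omega)
      rw [h1]
      linear_combination (h2.symm.trans h3) + h5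

lemma sum_mulVec {k : ℕ} (s : Finset ℕ) (f : ℕ → Matrix (Fin k) (Fin k) ℤ) (v : Fin k → ℤ) :
    (∑ m ∈ s, f m) *ᵥ v = ∑ m ∈ s, (f m *ᵥ v) := by
  funext a
  simp only [Matrix.mulVec, dotProduct, Matrix.sum_apply, Finset.sum_apply,
    Finset.sum_mul]
  rw [Finset.sum_comm]

lemma geom_sum_zero (hN : 2 ≤ N) : ∑ m ∈ Finset.range N, (Mmat N) ^ m = 0 := by
  apply matrix_ext_mulVec
  intro l
  rw [← Evec_single, Matrix.zero_mulVec, sum_mulVec]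
  rw [Finset.sum_congr rfl (fun m _ => pow_mulVec_Evec N hN m ((l:ℕ)+1)),
    Finset.sum_sub_distrib, sum_Evec_shift]
  abel

lemma geom_block (x : Matrix (Fin (N-1)) (Fin (N-1)) ℤ) (i : ℕ) (b : ℕ) :
    (∑ j ∈ Finset.range i, x ^ j) * (∑ s ∈ Finset.range b, x ^ (i * s))
      = ∑ m ∈ Finset.range (i * b), x ^ m := by
  induction b with
  | zero => simp
  | succ b ih =>
      rw [Finset.sum_range_succ, mul_add, ih]
      have h1 : i * (b + 1) = i * b + i := by ring
      rw [h1, Finset.sum_range_add]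
      congr 1
      rw [Finset.sum_mul]
      apply Finset.sum_congr rfl
      intro j _
      rw [← pow_add]
      exact congrArg (x ^ ·) (by omega)

lemma geom_q (hN : 2 ≤ N) (q : ℕ) :
    ∑ m ∈ Finset.range (q * N + 1), (Mmat N) ^ m = 1 := by
  induction q with
  | zero => simp
  | succ q ih =>
      have h1 : (q + 1) * N + 1 = (q * N + 1) + N := by ring
      rw [h1, Finset.sum_range_add, ih]
      have h2 : ∑ x ∈ Finset.range N, Mmat N ^ (q * N + 1 + x)
          = Mmat N ^ (q * N + 1) * ∑ x ∈ Finset.range N, Mmat N ^ x := by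
        rw [Finset.mul_sum]
        exact Finset.sum_congr rfl (fun x _ => (pow_add _ _ _))
      rw [h2, geom_sum_zero N hN, mul_zero, add_zero]

lemma B_mul_C (hN : 2 ≤ N) (i b q : ℕ) (hq : i * b = q * N + 1) :
    (∑ j ∈ Finset.range i, (Mmat N) ^ j) * (∑ s ∈ Finset.range b, (Mmat N) ^ (i * s)) = 1 := by
  rw [geom_block, hq, geom_q N hN]

/-! ### The complex side -/

noncomputable def om : ℂ := Complex.exp (2 * (π : ℂ) * Complex.I / N)

noncomputable def zvec : Fin (N - 1) → ℂ := fun k => om N ^ ((k : ℕ) + 1) - 1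

lemma om_pow (j : ℕ) :
    om N ^ j = Complex.exp (((2 * π * j / N : ℝ) : ℂ) * Complex.I) := by
  rw [om, ← Complex.exp_nat_mul]
  congr 1
  push_cast
  ring

lemma om_pow_N (hN : 1 ≤ N) : om N ^ N = 1 := by
  rw [om, ← Complex.exp_nat_mul]
  have hN0 : (N : ℂ) ≠ 0 := by
    exact_mod_cast Nat.cast_ne_zero.mpr (by omega)
  have h : (N : ℂ) * (2 * (π : ℂ) * Complex.I / N) = 2 * (π : ℂ) * Complex.I := by
    field_simp
  rw [h, Complex.exp_two_pi_mul_I]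

lemma vecMul_z (hN : 2 ≤ N) :
    Matrix.vecMul (zvec N) ((Mmat N).map ((↑) : ℤ → ℂ)) = om N • zvec N := by
  funext l
  have hl := l.isLt
  simp only [Matrix.vecMul, dotProduct, Matrix.map_apply, Mmat, zvec,
    Pi.smul_apply, smul_eq_mul]
  have e : ∀ k : Fin (N - 1),
      (om N ^ ((k : ℕ) + 1) - 1) *
        (((if (k : ℕ) = (l : ℕ) + 1 then (1:ℤ) else 0) - (if (k : ℕ) = 0 then 1 else 0) : ℤ) : ℂ)
      = (if (k : ℕ) = (l : ℕ) + 1 then (om N ^ ((k : ℕ) + 1) - 1) else 0)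
        - (if (k : ℕ) = 0 then (om N ^ ((k : ℕ) + 1) - 1) else 0) := by
    intro k
    split_ifs <;> push_cast <;> ring
  rw [Finset.sum_congr rfl (fun k _ => e k), Finset.sum_sub_distrib, sum_ite_coe, sum_ite_coe]
  rw [dif_pos (by omega : 0 < N - 1)]
  by_cases h : (l : ℕ) + 1 < N - 1
  · rw [dif_pos h]
    simp only []
    rw [show (l : ℕ) + 1 + 1 = ((l : ℕ) + 1) + 1 from rfl, pow_succ]
    ring
  · rw [dif_neg h]
    have hN2 : (l : ℕ) + 1 + 1 = N := by omega
    have h3 : om N * (om N ^ ((l:ℕ) + 1) - 1) = om N ^ ((l:ℕ) + 1 + 1) - om N := by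
      rw [pow_succ]; ring
    rw [h3, hN2, om_pow_N N (by omega)]
    ring

lemma vecMul_sum {k : ℕ} (s : Finset ℕ) (f : ℕ → Matrix (Fin k) (Fin k) ℂ) (v : Fin k → ℂ) :
    Matrix.vecMul v (∑ m ∈ s, f m) = ∑ m ∈ s, Matrix.vecMul v (f m) := by
  funext a
  simp only [Matrix.vecMul, dotProduct, Matrix.sum_apply, Finset.sum_apply,
    Finset.mul_sum]
  rw [Finset.sum_comm]

lemma vecMul_z_pow (hN : 2 ≤ N) (p : ℕ) :
    Matrix.vecMul (zvec N) (((Mmat N) ^ p).map ((↑) : ℤ → ℂ)) = (om N ^ p) • zvec N := by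
  have hmap : ∀ X : Matrix (Fin (N-1)) (Fin (N-1)) ℤ,
      X.map ((↑) : ℤ → ℂ) = (Int.castRingHom ℂ).mapMatrix X := fun X => rfl
  induction p with
  | zero =>
      rw [pow_zero, pow_zero, hmap, _root_.map_one, Matrix.vecMul_one, one_smul]
  | succ p ih =>
      rw [pow_succ, hmap, _root_.map_mul, ← Matrix.vecMul_vecMul, ← hmap, ← hmap, ih,
        Matrix.smul_vecMul, vecMul_z N hN, pow_succ, smul_smul]

/-! ### Arithmetic helpers -/

lemma coprime_of_odd_dvd_four (i n : ℕ) (hodd : i % 2 = 1) (h4 : Nat.gcd i n ∣ 4) :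
    Nat.Coprime i n := by
  obtain ⟨v, hv⟩ := Nat.gcd_dvd_left i n
  have hle : Nat.gcd i n ≤ 4 := Nat.le_of_dvd (by norm_num) h4
  unfold Nat.Coprime
  interval_cases h : Nat.gcd i n <;> omega

lemma exists_good_i (h5 : 5 ≤ N) (h6 : N ≠ 6) :
    ∃ i : ℕ, 2 ≤ i ∧ 2 * i ≤ N ∧ Nat.Coprime i N := by
  rcases Nat.even_or_odd N with he | ho
  · obtain ⟨t, ht⟩ := he
    have htN : N = 2 * t := by omega
    rcases Nat.even_or_odd t with hte | hto
    · obtain ⟨s, hs⟩ := hte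
      have ht4 : 4 ≤ t := by omega
      refine ⟨t - 1, by omega, by omega, ?_⟩
      apply coprime_of_odd_dvd_four _ _ (by omega)
      have d1 := Nat.gcd_dvd_left (t-1) N
      have d2 := Nat.gcd_dvd_right (t-1) N
      have d3 : Nat.gcd (t-1) N ∣ 2 * (t-1) := Dvd.dvd.mul_left d1 2
      have d4 : Nat.gcd (t-1) N ∣ N - 2 * (t-1) := Nat.dvd_sub d2 d3
      have h2 : N - 2 * (t-1) = 2 := by omega
      rw [h2] at d4
      exact dvd_trans d4 (by norm_num)
    · obtain ⟨s, hs⟩ := hto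
      have ht5 : 5 ≤ t := by omega
      refine ⟨t - 2, by omega, by omega, ?_⟩
      apply coprime_of_odd_dvd_four _ _ (by omega)
      have d1 := Nat.gcd_dvd_left (t-2) N
      have d2 := Nat.gcd_dvd_right (t-2) N
      have d3 : Nat.gcd (t-2) N ∣ 2 * (t-2) := Dvd.dvd.mul_left d1 2
      have d4 : Nat.gcd (t-2) N ∣ N - 2 * (t-2) := Nat.dvd_sub d2 d3
      have h2 : N - 2 * (t-2) = 4 := by omega
      rw [h2] at d4
      exact d4
  · refine ⟨2, le_refl _, by omega, ?_⟩
    rw [Nat.Prime.coprime_iff_not_dvd Nat.prime_two]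
    have := Nat.odd_iff.mp ho
    omega

lemma rotS_orth (w : ℂ) (lam : ℝ) (hlam0 : lam ≠ 0) (hlamsq : lam ^ 2 = w.re ^ 2 + w.im ^ 2) :
    (!![w.re / lam, -(w.im / lam); w.im / lam, w.re / lam] :
      Matrix (Fin 2) (Fin 2) ℝ).transpose *
      !![w.re / lam, -(w.im / lam); w.im / lam, w.re / lam] = 1 := by
  ext a c
  rw [Matrix.mul_apply, Fin.sum_univ_two]
  fin_cases a <;> fin_cases c <;>
    simp only [Matrix.transpose_apply, Matrix.cons_val', Matrix.cons_val_zero,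
      Matrix.cons_val_one, Matrix.head_cons, Matrix.head_fin_const, Matrix.empty_val',
      Matrix.cons_val_fin_one, Matrix.one_apply_eq, Matrix.one_apply_ne, Matrix.of_apply] <;>
    norm_num <;> field_simp <;> nlinarith [hlamsq]

lemma abs_exp_sub_one_sq (θ : ℝ) :
    ‖Complex.exp ((θ : ℂ) * Complex.I) - 1‖ ^ 2 = 2 - 2 * Real.cos θ := by
  rw [Complex.sq_norm, Complex.normSq_apply]
  simp only [Complex.sub_re, Complex.sub_im, Complex.one_re, Complex.one_im,
    Complex.exp_ofReal_mul_I_re, Complex.exp_ofReal_mul_I_im]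
  nlinarith [Real.sin_sq_add_cos_sq θ]

end NgonAux

open NgonAux Matrix

/-- For `N ≥ 5`, `N ≠ 6`, there is an `(N-1) × (N-1)` integer matrix `A` with `|det A| = 1`
and `A ≡ I (mod 2)` such that `P A` is a strictly larger similar copy of `P`, i.e. the
vertex set of a regular `N`-gon of strictly larger side length. -/
theorem exists_enlarging_matrix (N : ℕ) (h5 : 5 ≤ N) (h6 : N ≠ 6) (r φ : ℝ) (hr : 0 < r) :
    ∃ A : Matrix (Fin (N - 1)) (Fin (N - 1)) ℤ,
      |A.det| = 1 ∧
      (∀ k l : Fin (N - 1), k ≠ l → Even (A k l)) ∧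
      (∀ k : Fin (N - 1), Odd (A k k)) ∧
      ∃ (lam : ℝ) (S : Matrix (Fin 2) (Fin 2) ℝ),
        1 < lam ∧ S.transpose * S = 1 ∧
        ngonMatrix N r φ * A.map ((↑) : ℤ → ℝ) = lam • (S * ngonMatrix N r φ) := by
  have hN2 : 2 ≤ N := by omega
  obtain ⟨i, hi2, hiN, hcop⟩ := exists_good_i N h5 h6
  -- the inverse exponent
  obtain ⟨b, -, hb⟩ := Nat.exists_mul_mod_eq_one_of_coprime hcop (by omega)
  obtain ⟨q, hq⟩ : ∃ q, i * b = q * N + 1 := by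
    have hdm := Nat.div_add_mod (i * b) N
    rw [hb] at hdm
    exact ⟨i * b / N, by rw [mul_comm (i * b / N) N]; omega⟩
  -- the basic matrix B and its inverse C
  set B : Matrix (Fin (N-1)) (Fin (N-1)) ℤ := ∑ j ∈ Finset.range i, (Mmat N) ^ j with hB
  set C : Matrix (Fin (N-1)) (Fin (N-1)) ℤ := ∑ s ∈ Finset.range b, (Mmat N) ^ (i * s) with hC
  have hBC : B * C = 1 := B_mul_C N hN2 i b q hq
  -- pass to ZMod 2 and get the order
  have hmap2 : ∀ X : Matrix (Fin (N-1)) (Fin (N-1)) ℤ,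
      X.map ((↑) : ℤ → ZMod 2) = (Int.castRingHom (ZMod 2)).mapMatrix X := fun X => rfl
  have hBC2 : (B.map ((↑) : ℤ → ZMod 2)) * (C.map ((↑) : ℤ → ZMod 2)) = 1 := by
    rw [hmap2, hmap2, ← _root_.map_mul, hBC, _root_.map_one]
  obtain ⟨m, hm0, hBm2⟩ : ∃ m : ℕ, m ≠ 0 ∧ (B ^ m).map ((↑) : ℤ → ZMod 2) = 1 := by
    refine ⟨orderOf (⟨B.map ((↑) : ℤ → ZMod 2), C.map ((↑) : ℤ → ZMod 2), hBC2,
      mul_eq_one_comm.mp hBC2⟩ : (Matrix (Fin (N-1)) (Fin (N-1)) (ZMod 2))ˣ),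
      (orderOf_pos _).ne', ?_⟩
    set u : (Matrix (Fin (N-1)) (Fin (N-1)) (ZMod 2))ˣ :=
      ⟨B.map ((↑) : ℤ → ZMod 2), C.map ((↑) : ℤ → ZMod 2), hBC2,
        mul_eq_one_comm.mp hBC2⟩ with hu
    rw [hmap2, _root_.map_pow]
    have hval : ((Int.castRingHom (ZMod 2)).mapMatrix B) ^ orderOf u
        = ((u ^ orderOf u : (Matrix (Fin (N-1)) (Fin (N-1)) (ZMod 2))ˣ) :
        Matrix (Fin (N-1)) (Fin (N-1)) (ZMod 2)) := by
      rw [Units.val_pow_eq_pow_val]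
      rfl
    rw [hval, pow_orderOf_eq_one, Units.val_one]
  refine ⟨B ^ m, ?_, ?_, ?_, ?_⟩
  · -- determinant
    have hdet : B.det * C.det = 1 := by
      rw [← Matrix.det_mul, hBC, Matrix.det_one]
    have : IsUnit B.det := IsUnit.of_mul_eq_one _ hdet
    rcases Int.isUnit_iff.mp this with h | h <;>
      simp [Matrix.det_pow, abs_pow, h]
  · -- off-diagonal even
    intro k l hkl
    have hent := congrFun (congrFun hBm2 k) l
    rw [Matrix.map_apply, Matrix.one_apply_ne hkl] at hent
    obtain ⟨c, hc⟩ := (ZMod.intCast_zmod_eq_zero_iff_dvd _ 2).mp hent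
    exact ⟨c, by omega⟩
  · -- diagonal odd
    intro k
    have h1 := congrFun (congrFun hBm2 k) k
    rw [Matrix.map_apply, Matrix.one_apply_eq] at h1
    rcases Int.even_or_odd ((B ^ m) k k) with he | ho
    · exfalso
      obtain ⟨c, hc⟩ := he
      have : (((B ^ m) k k : ℤ) : ZMod 2) = 0 := by
        rw [ZMod.intCast_zmod_eq_zero_iff_dvd]
        exact ⟨c, by omega⟩
      rw [h1] at this
      exact one_ne_zero this
    · exact ho
  · -- the similarity
    set w : ℂ := (∑ j ∈ Finset.range i, om N ^ j) ^ m with hw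
    set lam : ℝ := ‖w‖ with hlam
    -- |ω^i - 1| and |ω - 1|
    have hNR : (0:ℝ) < N := by positivity
    have hN2R : (2:ℝ) ≤ N := by exact_mod_cast hN2
    have hi2R : (2:ℝ) ≤ i := by exact_mod_cast hi2
    have hiNR : 2 * (i:ℝ) ≤ N := by exact_mod_cast hiN
    have hpi := Real.pi_pos
    have hcos1 : Real.cos (2 * π * i / N) < Real.cos (2 * π * 1 / N) := by
      apply Real.cos_lt_cos_of_nonneg_of_le_pi
      · positivity
      · rw [div_le_iff₀ hNR]
        nlinarith
      · rw [div_lt_div_iff₀ hNR hNR]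
        nlinarith [mul_pos hpi hNR]
    have hcos0 : Real.cos (2 * π * 1 / N) < 1 := by
      have := Real.cos_lt_cos_of_nonneg_of_le_pi (le_refl (0:ℝ))
        (by rw [div_le_iff₀ hNR]; nlinarith : 2 * π * 1 / N ≤ π)
        (by positivity : (0:ℝ) < 2 * π * 1 / N)
      rwa [Real.cos_zero] at this
    have hom1 : om N = Complex.exp (((2 * π * 1 / N : ℝ) : ℂ) * Complex.I) := by
      have h := om_pow N 1
      rw [pow_one] at h
      rw [h]
      norm_num
    have habs1 : ‖om N - 1‖ ^ 2 = 2 - 2 * Real.cos (2 * π * 1 / N) := by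
      rw [hom1]
      exact abs_exp_sub_one_sq _
    have habsi : ‖om N ^ i - 1‖ ^ 2 = 2 - 2 * Real.cos (2 * π * i / N) := by
      rw [om_pow N i]
      exact abs_exp_sub_one_sq _
    have ha1pos : 0 < ‖om N - 1‖ := by
      have h0 := norm_nonneg (om N - 1)
      nlinarith
    have haless : ‖om N - 1‖ < ‖om N ^ i - 1‖ := by
      have h0 := norm_nonneg (om N ^ i - 1)
      nlinarith
    have hgeom : (∑ j ∈ Finset.range i, om N ^ j) * (om N - 1) = om N ^ i - 1 :=
      geom_sum_mul (om N) i
    have huabs : ‖∑ j ∈ Finset.range i, om N ^ j‖ * ‖om N - 1‖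
        = ‖om N ^ i - 1‖ := by
      rw [← norm_mul, hgeom]
    have hugt : 1 < ‖∑ j ∈ Finset.range i, om N ^ j‖ := by
      by_contra h
      push_neg at h
      nlinarith
    have hlam1 : 1 < lam := by
      rw [hlam, hw, norm_pow]
      exact one_lt_pow₀ hugt hm0
    have hlam0 : lam ≠ 0 := by positivity
    -- the vecMul identity for A = B ^ m
    have hmap : ∀ X : Matrix (Fin (N-1)) (Fin (N-1)) ℤ,
        X.map ((↑) : ℤ → ℂ) = (Int.castRingHom ℂ).mapMatrix X := fun X => rfl
    have hBz : Matrix.vecMul (zvec N) (B.map ((↑) : ℤ → ℂ))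
        = (∑ j ∈ Finset.range i, om N ^ j) • zvec N := by
      rw [hB, hmap, _root_.map_sum]
      have h4 : ∀ j, (Int.castRingHom ℂ).mapMatrix ((Mmat N) ^ j)
          = ((Mmat N) ^ j).map ((↑) : ℤ → ℂ) := fun j => rfl
      rw [Finset.sum_congr rfl (fun j _ => h4 j), NgonAux.vecMul_sum]
      rw [Finset.sum_congr rfl (fun j _ => vecMul_z_pow N hN2 j), ← Finset.sum_smul]
    have hkeyP : ∀ p : ℕ, Matrix.vecMul (zvec N) ((B ^ p).map ((↑) : ℤ → ℂ))
        = ((∑ j ∈ Finset.range i, om N ^ j) ^ p) • zvec N := by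
      intro p
      induction p with
      | zero =>
          rw [pow_zero, pow_zero, hmap, _root_.map_one, Matrix.vecMul_one, one_smul]
      | succ p ih =>
          rw [pow_succ, pow_succ, hmap, _root_.map_mul, ← Matrix.vecMul_vecMul, ← hmap, ← hmap,
            ih, Matrix.smul_vecMul, hBz, smul_smul, mul_comm]
    have hkey : Matrix.vecMul (zvec N) ((B ^ m).map ((↑) : ℤ → ℂ)) = w • zvec N := hkeyP m
    -- the real 2x2 rotation-dilation
    set S : Matrix (Fin 2) (Fin 2) ℝ :=
      !![w.re / lam, -(w.im / lam); w.im / lam, w.re / lam] with hS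
    have hlamsq : lam ^ 2 = w.re ^ 2 + w.im ^ 2 := by
      rw [hlam, Complex.sq_norm, Complex.normSq_apply]
      ring
    refine ⟨lam, S, hlam1, ?_, ?_⟩
    · rw [hS]
      exact rotS_orth w lam hlam0 hlamsq
    · -- the matrix identity
      set c : ℂ := (r : ℂ) * Complex.exp ((φ : ℂ) * Complex.I) with hcdef
      have hcz : ∀ j : ℕ,
          c * (om N ^ j - 1)
          = ((ngonVert N r φ j 0 : ℝ) : ℂ) + ((ngonVert N r φ j 1 : ℝ) : ℂ) * Complex.I := by
        intro j
        rw [hcdef, om_pow N j]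
        rw [show ((r : ℂ) * Complex.exp ((φ : ℂ) * Complex.I)) *
            (Complex.exp (((2 * π * j / N : ℝ) : ℂ) * Complex.I) - 1)
            = (r : ℂ) * Complex.exp (((2 * π * j / N + φ : ℝ) : ℂ) * Complex.I)
              - (r : ℂ) * Complex.exp ((φ : ℂ) * Complex.I) by
          rw [Complex.ofReal_add, add_mul, Complex.exp_add]
          ring]
        rw [Complex.exp_mul_I, Complex.exp_mul_I,
          ← Complex.ofReal_cos, ← Complex.ofReal_sin,
          ← Complex.ofReal_cos, ← Complex.ofReal_sin]
        simp only [ngonVert, Matrix.cons_val_zero, Matrix.cons_val_one, Matrix.head_cons]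
        push_cast
        ring
      have hF : ∀ k' : Fin (N - 1), c * zvec N k'
          = ((ngonMatrix N r φ 0 k' : ℝ) : ℂ) + ((ngonMatrix N r φ 1 k' : ℝ) : ℂ) * Complex.I :=
        fun k' => hcz ((k' : ℕ) + 1)
      have hre : ∀ x y : ℝ, ((x : ℂ) + (y : ℂ) * Complex.I).re = x := by
        intro x y; simp
      have him : ∀ x y : ℝ, ((x : ℂ) + (y : ℂ) * Complex.I).im = y := by
        intro x y; simp
      have hsum : ∀ l : Fin (N - 1),
          ∑ k, (c * zvec N k) * (((B ^ m) k l : ℤ) : ℂ) = w * (c * zvec N l) := by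
        intro l
        have h0 := congrFun hkey l
        simp only [Matrix.vecMul, dotProduct, Matrix.map_apply, Pi.smul_apply,
          smul_eq_mul] at h0
        calc ∑ k, (c * zvec N k) * (((B ^ m) k l : ℤ) : ℂ)
            = c * ∑ k, zvec N k * (((B ^ m) k l : ℤ) : ℂ) := by
              rw [Finset.mul_sum]
              exact Finset.sum_congr rfl (fun k _ => by ring)
          _ = c * (w * zvec N l) := by rw [h0]
          _ = w * (c * zvec N l) := by ring
      have hid : ∀ l : Fin (N - 1),
          (∑ k, ngonMatrix N r φ 0 k * (((B ^ m) k l : ℤ) : ℝ)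
            = w.re * ngonMatrix N r φ 0 l - w.im * ngonMatrix N r φ 1 l) ∧
          (∑ k, ngonMatrix N r φ 1 k * (((B ^ m) k l : ℤ) : ℝ)
            = w.re * ngonMatrix N r φ 1 l + w.im * ngonMatrix N r φ 0 l) := by
        intro l
        have h1 := congrArg Complex.re (hsum l)
        have h2 := congrArg Complex.im (hsum l)
        rw [Complex.re_sum] at h1
        rw [Complex.im_sum] at h2
        have e1 : ∀ k : Fin (N - 1), ((c * zvec N k) * (((B ^ m) k l : ℤ) : ℂ)).re
            = ngonMatrix N r φ 0 k * (((B ^ m) k l : ℤ) : ℝ) := by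
          intro k
          rw [Complex.mul_re, Complex.intCast_re, Complex.intCast_im, hF k, hre, him]
          push_cast
          ring
        have e2 : ∀ k : Fin (N - 1), ((c * zvec N k) * (((B ^ m) k l : ℤ) : ℂ)).im
            = ngonMatrix N r φ 1 k * (((B ^ m) k l : ℤ) : ℝ) := by
          intro k
          rw [Complex.mul_im, Complex.intCast_re, Complex.intCast_im, hF k, hre, him]
          push_cast
          ring
        rw [Finset.sum_congr rfl (fun k _ => e1 k)] at h1
        rw [Finset.sum_congr rfl (fun k _ => e2 k)] at h2
        rw [Complex.mul_re, hF l, hre, him] at h1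
        rw [Complex.mul_im, hF l, hre, him] at h2
        exact ⟨h1, by linarith [h2]⟩
      ext a l
      have hL : (ngonMatrix N r φ * (B ^ m).map ((↑) : ℤ → ℝ)) a l
          = ∑ k, ngonMatrix N r φ a k * (((B ^ m) k l : ℤ) : ℝ) := by
        rw [Matrix.mul_apply]
        exact Finset.sum_congr rfl (fun k _ => by rw [Matrix.map_apply])
      have hR : (lam • (S * ngonMatrix N r φ)) a l
          = lam * (S a 0 * ngonMatrix N r φ 0 l + S a 1 * ngonMatrix N r φ 1 l) := by
        rw [Matrix.smul_apply, Matrix.mul_apply, Fin.sum_univ_two, smul_eq_mul]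
      rw [hL, hR]
      have ha01 : a = 0 ∨ a = 1 := by omega
      rcases ha01 with rfl | rfl
      · rw [(hid l).1]
        have hS00 : S 0 0 = w.re / lam := by rw [hS]; norm_num [Matrix.cons_val_zero, Matrix.cons_val_one, Matrix.head_cons]
        have hS01 : S 0 1 = -(w.im / lam) := by rw [hS]; norm_num [Matrix.cons_val_zero, Matrix.cons_val_one, Matrix.head_cons]
        rw [hS00, hS01]
        field_simp
        ring
      · rw [(hid l).2]
        have hS10 : S 1 0 = w.im / lam := by rw [hS]; norm_num [Matrix.cons_val_zero, Matrix.cons_val_one, Matrix.head_cons]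
        have hS11 : S 1 1 = w.re / lam := by rw [hS]; norm_num [Matrix.cons_val_zero, Matrix.cons_val_one, Matrix.head_cons]
        rw [hS10, hS11]
        field_simp
        ring

end
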